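/- Fix τ ∈ ℂ with Im τ > 0 and set L = ℤ + τℤ. For all λ, μ ∈ ℂ with λ ∉ L, μ ∉ L, λ + μ ∉ L, and all z, w ∈ ℂ with z ∉ L, w ∉ L, z − w ∉ L, one has σ_λ(z)σ_μ(w) − σ_{λ+μ}(w)σ_λ(z−w) − σ_μ(w−z)σ_{λ+μ}(z) = 0. -/

import Mathlib

/-!
STATEMENT 17: The three-term identity
`σ_λ(z)σ_μ(w) − σ_{λ+μ}(w)σ_λ(z−w) − σ_μ(w−z)σ_{λ+μ}(z) = 0`
for the functions `σ_λ` built from Jacobi's theta function `θ₁`.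
-/

open Complex

/-- The lattice `L = ℤ + τℤ ⊆ ℂ`. -/
def lat (τ : ℂ) : Set ℂ := {w : ℂ | ∃ m n : ℤ, w = (m : ℂ) + (n : ℂ) * τ}

/-- Jacobi's theta function
`θ₁(z) = −Σ_{n∈ℤ} exp(2πi(z+1/2)(n+1/2) + πiτ(n+1/2)²)`. -/
noncomputable def theta1 (τ z : ℂ) : ℂ :=
  -∑' n : ℤ, Complex.exp (2 * (Real.pi : ℂ) * Complex.I * (z + 1 / 2) * ((n : ℂ) + 1 / 2)
      + (Real.pi : ℂ) * Complex.I * τ * ((n : ℂ) + 1 / 2) ^ 2)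

/-- The function `σ_λ(z) = θ₁(z−λ)θ₁′(0) / (θ₁(z)θ₁(−λ))`. -/
noncomputable def sigmaFn (τ lam z : ℂ) : ℂ :=
  theta1 τ (z - lam) * deriv (theta1 τ) 0 / (theta1 τ z * theta1 τ (-lam))

/-!
Clearing denominators (`θ₁` is odd), the identity becomes the four-term relation
`θ₁(z-λ) θ₁(w-μ) θ₁(λ+μ) θ₁(z-w)`
`  = θ₁(w-λ-μ) θ₁(z-w-λ) θ₁(z) θ₁(μ) + θ₁(z-w+μ) θ₁(z-λ-μ) θ₁(w) θ₁(λ)`,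
a specialization of Weierstrass' addition formula. That formula follows from
`θ₁(u+v) θ₁(u-v) = E(u) O(v) - O(u) E(v)`, where `E` and `O` are theta series in `2u` with
parameter `2τ`; it is obtained by splitting the double series over `(m, n)` according to the
parity of `m + n`.

Clearing denominators is legitimate because `θ₁(τ, ·)` vanishes only on `L`. When `Im τ ≥ 2/3`,
pairing the terms `n` and `-n-1` gives `θ₁(z) = 2 q^{1/4} sin(πz) (1 + ε)` with `|ε| < 1`
on the strip `|Im z| ≤ Im τ / 2`, and quasi-periodicity covers the rest of the plane. The
property "the zeros of `θ₁(τ, ·)` lie in `L`" is invariant under `τ ↦ τ + 1` and, by Jacobi's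
imaginary transformation, under `τ ↦ -1/τ`; these two moves carry every point of the upper
half-plane into the fundamental domain, where `Im τ ≥ √3/2`.
-/

open scoped Real

noncomputable section

def theta1Term (τ z : ℂ) (n : ℤ) : ℂ :=
  -cexp (2 * π * I * (z + 1 / 2) * (n + 1 / 2) + π * I * τ * (n + 1 / 2) ^ 2)

lemma theta1_eq_tsum (τ z : ℂ) : theta1 τ z = ∑' n : ℤ, theta1Term τ z n := by
  rw [theta1, ← tsum_neg]; rfl

lemma neg_cexp_eq_cexp_add_pi_mul_I (x : ℂ) : -cexp x = cexp (x + π * I) := by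
  rw [exp_add, exp_pi_mul_I, mul_neg_one]

lemma theta1Term_eq_jacobiTheta₂_term (τ z : ℂ) (n : ℤ) :
    theta1Term τ z n =
      -(cexp (π * I * (z + 1 / 2 + τ / 4)) * jacobiTheta₂_term n (z + 1 / 2 + τ / 2) τ) := by
  rw [theta1Term, jacobiTheta₂_term, ← exp_add]
  congr 2
  ring

lemma summable_theta1Term {τ : ℂ} (hτ : 0 < τ.im) (z : ℂ) : Summable (theta1Term τ z) := by
  rw [show theta1Term τ z = _ from funext (theta1Term_eq_jacobiTheta₂_term τ z)]
  exact (((summable_jacobiTheta₂_term_iff _ τ).mpr hτ).mul_left _).neg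

lemma summable_norm_theta1Term {τ : ℂ} (hτ : 0 < τ.im) (z : ℂ) :
    Summable fun n ↦ ‖theta1Term τ z n‖ :=
  summable_norm_iff.mpr (summable_theta1Term hτ z)

lemma theta1_neg (τ z : ℂ) : theta1 τ (-z) = -theta1 τ z := by
  rw [theta1_eq_tsum, theta1_eq_tsum, ← tsum_neg,
    ← (Equiv.subLeft (-1 : ℤ)).tsum_eq (theta1Term τ (-z))]
  refine tsum_congr fun n ↦ ?_
  rw [Equiv.subLeft_apply, theta1Term, theta1Term, neg_neg, neg_cexp_eq_cexp_add_pi_mul_I]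
  exact exp_eq_exp_iff_exists_int.mpr ⟨-n, by push_cast; ring⟩

lemma theta1_add_int_mul (τ z : ℂ) (m : ℤ) :
    theta1 τ (z + m * τ) = cexp (-π * I * (m ^ 2 * τ + 2 * m * z + m)) * theta1 τ z := by
  rw [theta1_eq_tsum, theta1_eq_tsum, ← tsum_mul_left,
    ← (Equiv.subRight m).tsum_eq (theta1Term τ (z + m * τ))]
  refine tsum_congr fun n ↦ ?_
  rw [Equiv.subRight_apply, theta1Term, theta1Term, mul_neg, ← exp_add]
  congr 2
  push_cast
  ring

def prodEquivEvenSum : ℤ × ℤ ≃ {p : ℤ × ℤ | Even (p.1 + p.2)} where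
  toFun p := ⟨(p.1 + p.2, p.1 - p.2), p.1, by ring⟩
  invFun q := ((q.1.1 + q.1.2) / 2, (q.1.1 - q.1.2) / 2)
  left_inv p := by ext <;> simp <;> omega
  right_inv := by
    rintro ⟨⟨m, n⟩, r, h⟩
    ext <;> simp <;> omega

def prodEquivOddSum : ℤ × ℤ ≃ ({p : ℤ × ℤ | Even (p.1 + p.2)}ᶜ : Set (ℤ × ℤ)) where
  toFun p := ⟨(p.1 + p.2, p.1 - p.2 - 1), by rintro ⟨r, h⟩; simp at h; omega⟩
  invFun q := ((q.1.1 + q.1.2 + 1) / 2, (q.1.1 - q.1.2 - 1) / 2)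
  left_inv p := by ext <;> simp <;> omega
  right_inv := by
    rintro ⟨⟨m, n⟩, h⟩
    obtain ⟨r, hr⟩ := Int.not_even_iff_odd.mp h
    ext <;> simp at hr ⊢ <;> omega

lemma theta1Term_mul_theta1Term_of_even (τ u v : ℂ) (j k : ℤ) :
    theta1Term τ (u + v) (j + k) * theta1Term τ (u - v) (j - k) =
      -(cexp (2 * π * I * u + π * I * τ / 2) * jacobiTheta₂_term j (2 * u + τ) (2 * τ) *
        jacobiTheta₂_term k (2 * v) (2 * τ)) := by
  rw [theta1Term, theta1Term, jacobiTheta₂_term, jacobiTheta₂_term, neg_mul_neg, ← exp_add,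
    ← exp_add, ← exp_add, neg_cexp_eq_cexp_add_pi_mul_I]
  exact exp_eq_exp_iff_exists_int.mpr ⟨j, by push_cast; ring⟩

lemma theta1Term_mul_theta1Term_of_odd (τ u v : ℂ) (j k : ℤ) :
    theta1Term τ (u + v) (j + k) * theta1Term τ (u - v) (j - k - 1) =
      jacobiTheta₂_term j (2 * u) (2 * τ) *
        (cexp (2 * π * I * v + π * I * τ / 2) * jacobiTheta₂_term k (2 * v + τ) (2 * τ)) := by
  rw [theta1Term, theta1Term, jacobiTheta₂_term, jacobiTheta₂_term, neg_mul_neg, ← exp_add,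
    ← exp_add, ← exp_add]
  exact exp_eq_exp_iff_exists_int.mpr ⟨j, by push_cast; ring⟩

lemma summable_norm_jacobiTheta₂_term {τ : ℂ} (hτ : 0 < τ.im) (z : ℂ) :
    Summable fun n ↦ ‖jacobiTheta₂_term n z τ‖ :=
  summable_norm_iff.mpr ((summable_jacobiTheta₂_term_iff z τ).mpr hτ)

lemma theta1_add_mul_theta1_sub {τ : ℂ} (hτ : 0 < τ.im) (u v : ℂ) :
    theta1 τ (u + v) * theta1 τ (u - v) =
      jacobiTheta₂ (2 * u) (2 * τ) *
          (cexp (2 * π * I * v + π * I * τ / 2) * jacobiTheta₂ (2 * v + τ) (2 * τ)) -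
        cexp (2 * π * I * u + π * I * τ / 2) * jacobiTheta₂ (2 * u + τ) (2 * τ) *
          jacobiTheta₂ (2 * v) (2 * τ) := by
  have h2τ : 0 < (2 * τ).im := by simpa using hτ
  have hnorm (w : ℂ) (c : ℂ) : Summable fun n ↦ ‖c * jacobiTheta₂_term n w (2 * τ)‖ := by
    simpa only [norm_mul] using (summable_norm_jacobiTheta₂_term h2τ w).mul_left ‖c‖
  have hprod := summable_mul_of_summable_norm (summable_norm_theta1Term hτ (u + v))
    (summable_norm_theta1Term hτ (u - v))
  have heven : ∑' p : {p : ℤ × ℤ | Even (p.1 + p.2)},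
      theta1Term τ (u + v) p.1.1 * theta1Term τ (u - v) p.1.2 =
      -(cexp (2 * π * I * u + π * I * τ / 2) * jacobiTheta₂ (2 * u + τ) (2 * τ) *
        jacobiTheta₂ (2 * v) (2 * τ)) := by
    rw [← prodEquivEvenSum.tsum_eq]
    simp only [prodEquivEvenSum, Equiv.coe_fn_mk, theta1Term_mul_theta1Term_of_even]
    have h := tsum_mul_tsum_of_summable_norm
      (hnorm (2 * u + τ) (cexp (2 * π * I * u + π * I * τ / 2)))
      (summable_norm_jacobiTheta₂_term h2τ (2 * v))
    rw [tsum_mul_left] at h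
    rw [tsum_neg, jacobiTheta₂, jacobiTheta₂, h]
  have hodd : ∑' p : ({p : ℤ × ℤ | Even (p.1 + p.2)}ᶜ : Set (ℤ × ℤ)),
      theta1Term τ (u + v) p.1.1 * theta1Term τ (u - v) p.1.2 =
      jacobiTheta₂ (2 * u) (2 * τ) *
        (cexp (2 * π * I * v + π * I * τ / 2) * jacobiTheta₂ (2 * v + τ) (2 * τ)) := by
    rw [← prodEquivOddSum.tsum_eq]
    simp only [prodEquivOddSum, Equiv.coe_fn_mk, theta1Term_mul_theta1Term_of_odd]
    have h := tsum_mul_tsum_of_summable_norm (summable_norm_jacobiTheta₂_term h2τ (2 * u))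
      (hnorm (2 * v + τ) (cexp (2 * π * I * v + π * I * τ / 2)))
    rw [tsum_mul_left] at h
    rw [jacobiTheta₂, jacobiTheta₂, h]
  rw [theta1_eq_tsum, theta1_eq_tsum, tsum_mul_tsum_of_summable_norm
    (summable_norm_theta1Term hτ _) (summable_norm_theta1Term hτ _),
    ← (hprod.subtype _).tsum_add_tsum_compl (hprod.subtype _), heven, hodd]
  ring

lemma theta1_weierstrass {τ : ℂ} (hτ : 0 < τ.im) (x y a b : ℂ) :
    theta1 τ (x + y) * theta1 τ (x - y) * (theta1 τ (a + b) * theta1 τ (a - b)) =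
      theta1 τ (x + a) * theta1 τ (x - a) * (theta1 τ (y + b) * theta1 τ (y - b)) -
        theta1 τ (x + b) * theta1 τ (x - b) * (theta1 τ (y + a) * theta1 τ (y - a)) := by
  simp only [theta1_add_mul_theta1_sub hτ]
  ring

lemma theta1_four_term {τ : ℂ} (hτ : 0 < τ.im) (z w l m : ℂ) :
    theta1 τ (z - l) * theta1 τ (w - m) * theta1 τ (l + m) * theta1 τ (z - w) =
      theta1 τ (w - (l + m)) * theta1 τ (z - w - l) * theta1 τ z * theta1 τ m +
        theta1 τ (z - w + m) * theta1 τ (z - (l + m)) * theta1 τ w * theta1 τ l := by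
  have W := theta1_weierstrass hτ ((z - l + w - m) / 2) ((z - l - w + m) / 2)
    ((l + m + z - w) / 2) ((l + m - z + w) / 2)
  -- `ring_nf` brings the arguments of `θ₁` in `W` and in the goal to common normal forms
  ring_nf at W ⊢
  simp only [theta1_neg] at W
  linear_combination W

def dirichletKernel (n : ℕ) (z : ℂ) : ℂ :=
  ∑ j ∈ Finset.range (2 * n + 1), cexp (2 * π * I * (j - n) * z)

lemma sin_mul_dirichletKernel (n : ℕ) (z : ℂ) :
    sin (π * z) * dirichletKernel n z = sin ((2 * n + 1) * (π * z)) := by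
  have h := Finset.sum_range_sub' (fun j : ℕ ↦ cexp (π * I * (2 * j - 2 * n - 1) * z)) (2 * n + 1)
  rw [← mul_right_inj' (two_ne_zero' ℂ), ← mul_assoc, two_sin, two_sin, dirichletKernel,
    Finset.mul_sum]
  convert congrArg (· * I) h using 1
  · rw [Finset.sum_mul]
    refine Finset.sum_congr rfl fun j _ ↦ ?_
    rw [sub_mul, sub_mul, sub_mul, mul_right_comm, ← exp_add, mul_right_comm (cexp _), ← exp_add]
    congr 3 <;> push_cast <;> ring
  · congr 3 <;> push_cast <;> ring

lemma norm_dirichletKernel_le (n : ℕ) (z : ℂ) :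
    ‖dirichletKernel n z‖ ≤ (2 * n + 1) * rexp (2 * π * n * |z.im|) := by
  have hterm : ∀ j ∈ Finset.range (2 * n + 1),
      ‖cexp (2 * π * I * (j - n) * z)‖ ≤ rexp (2 * π * n * |z.im|) := by
    intro j hjr
    have hj2 : (j : ℝ) ≤ 2 * n := by exact_mod_cast Nat.lt_succ_iff.mp (Finset.mem_range.mp hjr)
    have hj : |(j : ℝ) - n| ≤ n := abs_le.mpr ⟨by linarith [j.cast_nonneg (α := ℝ)], by linarith⟩
    rw [norm_exp, Real.exp_le_exp]
    have hle : ((n : ℝ) - j) * z.im ≤ n * |z.im| := (le_abs_self _).trans <| by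
      rw [abs_mul, abs_sub_comm]
      exact mul_le_mul_of_nonneg_right hj (abs_nonneg _)
    simp only [mul_re, mul_im, ofReal_re, ofReal_im, I_re, I_im, sub_re, sub_im, natCast_re,
      natCast_im, re_ofNat, im_ofNat]
    nlinarith [Real.pi_pos]
  calc ‖dirichletKernel n z‖ ≤ ∑ j ∈ Finset.range (2 * n + 1), rexp (2 * π * n * |z.im|) :=
        (norm_sum_le _ _).trans (Finset.sum_le_sum hterm)
    _ = _ := by simp

def theta1QuotTerm (τ z : ℂ) (n : ℕ) : ℂ :=
  cexp (π * I * τ * (n ^ 2 + n) + π * I * n) * dirichletKernel n z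

lemma theta1Term_add_theta1Term_neg (τ z : ℂ) (n : ℕ) :
    theta1Term τ z n + theta1Term τ z (-(n + 1)) =
      2 * cexp (π * I * τ / 4) * sin (π * z) * theta1QuotTerm τ z n := by
  set w := cexp (π * I * τ * (n ^ 2 + n) + π * I * n)
  have hpos : theta1Term τ z n =
      cexp (π * I * (τ / 4 - 1 / 2)) * w * cexp ((2 * n + 1) * (π * z) * I) := by
    rw [theta1Term, neg_cexp_eq_cexp_add_pi_mul_I, ← exp_add, ← exp_add]
    exact exp_eq_exp_iff_exists_int.mpr ⟨1, by push_cast; ring⟩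
  have hneg : theta1Term τ z (-(n + 1)) =
      -(cexp (π * I * (τ / 4 - 1 / 2)) * w * cexp (-((2 * n + 1) * (π * z)) * I)) := by
    rw [theta1Term, neg_inj, ← exp_add, ← exp_add]
    exact exp_eq_exp_iff_exists_int.mpr ⟨-n, by push_cast; ring⟩
  have hI : cexp (π * I * (τ / 4 - 1 / 2)) = -I * cexp (π * I * τ / 4) := by
    rw [show -I * cexp (π * I * τ / 4) = -cexp (π / 2 * I + π * I * τ / 4) by
      rw [exp_add, exp_pi_div_two_mul_I]; ring, neg_cexp_eq_cexp_add_pi_mul_I]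
    exact exp_eq_exp_iff_exists_int.mpr ⟨-1, by push_cast; ring⟩
  rw [hpos, hneg, theta1QuotTerm]
  linear_combination
    (w * cexp ((2 * n + 1) * (π * z) * I) - w * cexp (-((2 * n + 1) * (π * z)) * I)) * hI
      - 2 * cexp (π * I * τ / 4) * w * sin_mul_dirichletKernel n z
      - cexp (π * I * τ / 4) * w * two_sin ((2 * n + 1) * (π * z))

lemma hasSum_theta1QuotTerm {τ : ℂ} (hτ : 0 < τ.im) (z : ℂ) :
    HasSum (fun n ↦ 2 * cexp (π * I * τ / 4) * sin (π * z) * theta1QuotTerm τ z n)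
      (theta1 τ z) := by
  rw [theta1_eq_tsum]
  exact (summable_theta1Term hτ z).hasSum.nat_add_neg_add_one.congr_fun fun n ↦
    (theta1Term_add_theta1Term_neg τ z n).symm

lemma norm_theta1QuotTerm_le {τ z : ℂ} (hz : |z.im| ≤ τ.im / 2) (n : ℕ) :
    ‖theta1QuotTerm τ z n‖ ≤ (3 * rexp (-(π * τ.im))) ^ n := by
  have hτ : 0 ≤ τ.im := by linarith [abs_nonneg z.im]
  have hre : (π * I * τ * (n ^ 2 + n) + π * I * n).re = -(π * τ.im * (n ^ 2 + n)) := by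
    rw [show (n : ℂ) ^ 2 + n = ((n ^ 2 + n : ℕ) : ℂ) by push_cast; ring]
    simp only [add_re, mul_re, mul_im, ofReal_re, ofReal_im, I_re, I_im, natCast_re, natCast_im]
    push_cast
    ring
  have hexp :
      rexp (-(π * τ.im * (n ^ 2 + n))) * rexp (2 * π * n * |z.im|) ≤ rexp (-(π * τ.im)) ^ n := by
    rw [← Real.exp_add, ← Real.exp_nat_mul, Real.exp_le_exp]
    have : (n : ℝ) ≤ n ^ 2 := by exact_mod_cast Nat.le_self_pow two_ne_zero n
    nlinarith [mul_le_mul_of_nonneg_left hz (by positivity : (0 : ℝ) ≤ 2 * π * n),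
      mul_le_mul_of_nonneg_left this (by positivity : 0 ≤ π * τ.im)]
  have h3 : (2 * n + 1 : ℝ) ≤ 3 ^ n := by
    have := one_add_mul_le_pow (a := (2 : ℝ)) (by norm_num) n
    norm_num at this; linarith
  calc ‖theta1QuotTerm τ z n‖
      ≤ rexp (-(π * τ.im * (n ^ 2 + n))) * ((2 * n + 1) * rexp (2 * π * n * |z.im|)) := by
        rw [theta1QuotTerm, norm_mul, norm_exp, hre]
        gcongr
        exact norm_dirichletKernel_le n z
    _ ≤ 3 ^ n * rexp (-(π * τ.im)) ^ n := by
        rw [mul_left_comm]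
        gcongr
    _ = _ := (mul_pow _ _ _).symm

lemma tsum_ne_zero_of_norm_le_geometric {E : Type*} [NormedAddCommGroup E] [CompleteSpace E]
    {f : ℕ → E} (h0 : ‖f 0‖ = 1) {r : ℝ} (hr : r < 1 / 2) (hf : ∀ n, ‖f n‖ ≤ r ^ n) :
    ∑' n, f n ≠ 0 := by
  have hr0 : 0 ≤ r := by simpa using (norm_nonneg _).trans (hf 1)
  have hsum : Summable f :=
    Summable.of_norm_bounded (summable_geometric_of_lt_one hr0 (by linarith)) hf
  have htail : ‖∑' n, f (n + 1)‖ ≤ r * (1 - r)⁻¹ :=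
    tsum_of_norm_bounded ((hasSum_geometric_of_lt_one hr0 (by linarith)).mul_left r)
      fun n ↦ (hf (n + 1)).trans_eq (pow_succ' r n)
  have hlt : r * (1 - r)⁻¹ < 1 := by
    rw [← div_eq_mul_inv, div_lt_one (by linarith)]; linarith
  rw [hsum.tsum_eq_zero_add]
  intro h
  rw [eq_neg_of_add_eq_zero_left h, norm_neg] at h0
  linarith

lemma three_mul_exp_neg_pi_mul_lt {t : ℝ} (ht : 2 / 3 ≤ t) : 3 * rexp (-(π * t)) < 1 / 2 := by
  have h2 : 2 < π * t := by nlinarith [Real.pi_gt_three]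
  have he : 6 < rexp 2 := by
    rw [show (2 : ℝ) = 1 + 1 by norm_num, Real.exp_add]
    nlinarith [Real.exp_one_gt_d9]
  rw [Real.exp_neg]
  have := Real.exp_lt_exp.mpr h2
  rw [mul_inv_lt_iff₀ (by positivity)]
  linarith

lemma theta1_ne_zero_of_abs_im_le {τ z : ℂ} (ht : 2 / 3 ≤ τ.im) (hz : |z.im| ≤ τ.im / 2)
    (hzℤ : ∀ k : ℤ, z ≠ k) : theta1 τ z ≠ 0 := by
  have hτ : 0 < τ.im := by linarith
  have hr := three_mul_exp_neg_pi_mul_lt ht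
  have hsum : Summable (theta1QuotTerm τ z) := Summable.of_norm_bounded
    (summable_geometric_of_lt_one (by positivity) (by linarith)) (norm_theta1QuotTerm_le hz)
  have hsin : sin (π * z) ≠ 0 := by
    rw [Ne, sin_eq_zero_iff]
    rintro ⟨k, hk⟩
    exact hzℤ k (mul_left_cancel₀ (ofReal_ne_zero.mpr Real.pi_ne_zero) (hk.trans (mul_comm _ _)))
  rw [(hasSum_theta1QuotTerm hτ z).unique (hsum.hasSum.mul_left _)]
  refine mul_ne_zero (mul_ne_zero (mul_ne_zero two_ne_zero (exp_ne_zero _)) hsin) ?_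
  exact tsum_ne_zero_of_norm_le_geometric (by simp [theta1QuotTerm, dirichletKernel]) hr
    (norm_theta1QuotTerm_le hz)

lemma theta1_ne_zero_of_two_thirds_le_im {τ z : ℂ} (ht : 2 / 3 ≤ τ.im) (hz : z ∉ lat τ) :
    theta1 τ z ≠ 0 := by
  have hτ : 0 < τ.im := by linarith
  set n : ℤ := round (z.im / τ.im)
  have hstrip : |(z - n * τ).im| ≤ τ.im / 2 := by
    have him : (z - n * τ).im = (z.im / τ.im - n) * τ.im := by
      simp only [sub_im, mul_im, intCast_re, intCast_im, zero_mul, add_zero]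
      field_simp
    rw [him, abs_mul, abs_of_pos hτ]
    nlinarith [abs_sub_round (z.im / τ.im)]
  have hℤ : ∀ k : ℤ, z - n * τ ≠ k := fun k hk ↦ hz ⟨k, n, by linear_combination hk⟩
  rw [← sub_add_cancel z (n * τ), theta1_add_int_mul]
  exact mul_ne_zero (exp_ne_zero _) (theta1_ne_zero_of_abs_im_le ht hstrip hℤ)

lemma theta1_add_one_left (τ z : ℂ) : theta1 (τ + 1) z = cexp (π * I / 4) * theta1 τ z := by
  rw [theta1_eq_tsum, theta1_eq_tsum, ← tsum_mul_left]
  refine tsum_congr fun n ↦ ?_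
  rw [theta1Term, theta1Term, mul_neg, ← exp_add, neg_inj]
  -- `(n + 1/2)² - 1/4 = n (n + 1)` is even
  obtain ⟨t, ht⟩ := Int.even_mul_succ_self n
  refine exp_eq_exp_iff_exists_int.mpr ⟨t, ?_⟩
  have ht' : (n : ℂ) * (n + 1) = 2 * t := by exact_mod_cast ht.trans (two_mul t).symm
  linear_combination π * I * ht'

lemma lat_add_one (τ : ℂ) : lat (τ + 1) = lat τ := by
  ext w
  constructor
  · rintro ⟨m, n, rfl⟩
    exact ⟨m + n, n, by push_cast; ring⟩
  · rintro ⟨m, n, rfl⟩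
    exact ⟨m - n, n, by push_cast; ring⟩

lemma mem_lat_neg_inv_iff {τ : ℂ} (hτ : τ ≠ 0) (z : ℂ) : z ∈ lat (-1 / τ) ↔ τ * z ∈ lat τ := by
  constructor
  · rintro ⟨m, n, rfl⟩
    exact ⟨-n, m, by field_simp; push_cast; ring⟩
  · rintro ⟨m, n, h⟩
    refine ⟨n, -m, ?_⟩
    field_simp
    push_cast
    linear_combination h

lemma theta1_eq_jacobiTheta₂ (τ z : ℂ) :
    theta1 τ z = -(cexp (π * I * (z + 1 / 2 + τ / 4)) * jacobiTheta₂ (z + 1 / 2 + τ / 2) τ) := by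
  simp only [theta1_eq_tsum, theta1Term_eq_jacobiTheta₂_term, jacobiTheta₂, tsum_neg, tsum_mul_left]

lemma theta1_eq_zero_iff (τ z : ℂ) :
    theta1 τ z = 0 ↔ jacobiTheta₂ (z + 1 / 2 + τ / 2) τ = 0 := by
  simp [theta1_eq_jacobiTheta₂, exp_ne_zero]

lemma theta1_neg_inv_eq_zero_iff {τ : ℂ} (hτ : τ ≠ 0) (z : ℂ) :
    theta1 (-1 / τ) z = 0 ↔ theta1 τ (τ * z) = 0 := by
  have hshift : τ * z + 1 / 2 + τ / 2 = τ * (z + 1 / 2 + -1 / τ / 2) + 1 := by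
    field_simp; ring
  rw [theta1_eq_zero_iff, theta1_eq_zero_iff, hshift, jacobiTheta₂_add_left,
    jacobiTheta₂_functional_equation (τ * _) τ, mul_div_cancel_left₀ _ hτ]
  simp [hτ, exp_ne_zero, cpow_eq_zero_iff]

lemma forall_theta1_neg_inv_ne_zero_iff {τ : ℂ} (hτ : τ ≠ 0) :
    (∀ z ∉ lat (-1 / τ), theta1 (-1 / τ) z ≠ 0) ↔ ∀ z ∉ lat τ, theta1 τ z ≠ 0 := by
  simp only [Ne, mem_lat_neg_inv_iff hτ, theta1_neg_inv_eq_zero_iff hτ]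
  exact (Equiv.mulLeft₀ τ hτ).forall_congr_right (q := fun w ↦ w ∉ lat τ → theta1 τ w ≠ 0)

lemma forall_theta1_add_one_ne_zero_iff (τ : ℂ) :
    (∀ z ∉ lat (τ + 1), theta1 (τ + 1) z ≠ 0) ↔ ∀ z ∉ lat τ, theta1 τ z ≠ 0 := by
  simp only [lat_add_one, theta1_add_one_left, mul_ne_zero_iff, exp_ne_zero, ne_eq, true_and,
    not_false_eq_true]

open UpperHalfPlane ModularGroup in
open scoped MatrixGroups Modular in
theorem UpperHalfPlane.forall_of_forall_mem_fd {P : ℍ → Prop}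
    (hS : ∀ τ, P (S • τ) ↔ P τ) (hT : ∀ τ, P (T • τ) ↔ P τ) (hfd : ∀ τ ∈ 𝒟, P τ) (τ : ℍ) :
    P τ := by
  have hinv (g : SL(2, ℤ)) : ∀ τ, P (g • τ) ↔ P τ := by
    have hg : g ∈ Subgroup.closure {S, T} := by simp [SpecialLinearGroup.SL2Z_generators]
    induction hg using Subgroup.closure_induction with
    | mem g hg =>
      rcases hg with rfl | rfl
      exacts [hS, hT]
    | one => simp
    | mul g h _ _ hg hh => intro τ; rw [mul_smul, hg, hh]
    | inv g _ hg => intro τ; rw [← hg, smul_inv_smul]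
  obtain ⟨g, hg⟩ := exists_smul_mem_fd τ
  exact (hinv g τ).1 (hfd _ hg)

open UpperHalfPlane ModularGroup in
lemma theta1_ne_zero {τ z : ℂ} (hτ : 0 < τ.im) (hz : z ∉ lat τ) : theta1 τ z ≠ 0 := by
  refine UpperHalfPlane.forall_of_forall_mem_fd (P := fun τ : ℍ ↦ ∀ z ∉ lat τ, theta1 τ z ≠ 0)
    (fun τ ↦ ?_) (fun τ ↦ ?_) (fun τ hτ z hz ↦ ?_) ⟨τ, hτ⟩ z hz
  · have h : (-(τ : ℂ))⁻¹ = -1 / τ := by rw [inv_neg, neg_div, one_div]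
    simpa only [modular_S_smul, coe_mk, h] using forall_theta1_neg_inv_ne_zero_iff τ.ne_zero
  · simpa only [modular_T_smul, coe_vadd, ofReal_one, add_comm (1 : ℂ)] using
      forall_theta1_add_one_ne_zero_iff τ
  · refine theta1_ne_zero_of_two_thirds_le_im ?_ hz
    rw [coe_im]
    nlinarith [three_le_four_mul_im_sq_of_mem_fd hτ, τ.im_pos]

end

theorem sigma_three_term_identity
    (τ : ℂ) (hτ : 0 < τ.im) (lam mu z w : ℂ)
    (hlam : lam ∉ lat τ) (hmu : mu ∉ lat τ) (hlm : lam + mu ∉ lat τ)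
    (hz : z ∉ lat τ) (hw : w ∉ lat τ) (hzw : z - w ∉ lat τ) :
    sigmaFn τ lam z * sigmaFn τ mu w
      - sigmaFn τ (lam + mu) w * sigmaFn τ lam (z - w)
      - sigmaFn τ mu (w - z) * sigmaFn τ (lam + mu) z = 0 := by
  have hθ {x : ℂ} (hx : x ∉ lat τ) : theta1 τ x ≠ 0 := theta1_ne_zero hτ hx
  simp only [sigmaFn]
  rw [← neg_sub z w, show -(z - w) - mu = -(z - w + mu) by ring]
  simp only [theta1_neg]
  field_simp [hθ hlam, hθ hmu, hθ hlm, hθ hz, hθ hw, hθ hzw]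
  linear_combination deriv (theta1 τ) 0 ^ 2 * theta1_four_term hτ z w lam mu
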